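/- For every term T in FreeMagma X: (i) ∂T is an LD-expansion of T and of every atomic LD-expansion of T; (ii) T →LD T' implies ∂T →LD ∂T'; (iii) for every p, the term ∂^p T is an LD-expansion of every term obtained from T by at most p atomic LD-expansion steps. -/
import Mathlib


/-- LD-expansion: the smallest reflexive and transitive relation on `FreeMagma X`
compatible with the operation on both sides and containing all pairs
`(T₁ ◃ (T₂ ◃ T₃), (T₁ ◃ T₂) ◃ (T₁ ◃ T₃))`. -/
inductive LDExp {X : Type*} : FreeMagma X → FreeMagma X → Prop
  | ld (a b c : FreeMagma X) : LDExp (a * (b * c)) ((a * b) * (a * c))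
  | refl (a : FreeMagma X) : LDExp a a
  | trans {a b c : FreeMagma X} : LDExp a b → LDExp b c → LDExp a c
  | mul_left {a b : FreeMagma X} (c : FreeMagma X) : LDExp a b → LDExp (c * a) (c * b)
  | mul_right {a b : FreeMagma X} (c : FreeMagma X) : LDExp a b → LDExp (a * c) (b * c)

/-- Atomic LD-expansion: replace exactly one subterm of the form `T₁ ◃ (T₂ ◃ T₃)`
by `(T₁ ◃ T₂) ◃ (T₁ ◃ T₃)`. -/
inductive LDAtom {X : Type*} : FreeMagma X → FreeMagma X → Prop
  | ld (a b c : FreeMagma X) : LDAtom (a * (b * c)) ((a * b) * (a * c))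
  | mul_left {a b : FreeMagma X} (c : FreeMagma X) : LDAtom a b → LDAtom (c * a) (c * b)
  | mul_right {a b : FreeMagma X} (c : FreeMagma X) : LDAtom a b → LDAtom (a * c) (b * c)

/-- The auxiliary operation `S ⊗ T`: `S ⊗ x = S ◃ x` and
`S ⊗ (T₀ ◃ T₁) = (S ⊗ T₀) ◃ (S ⊗ T₁)`. -/
def otimes {X : Type*} (S : FreeMagma X) : FreeMagma X → FreeMagma X
  | .of x => S * .of x
  | .mul t₀ t₁ => otimes S t₀ * otimes S t₁

/-- The operator `∂`: `∂x = x` and `∂(T₀ ◃ T₁) = ∂T₀ ⊗ ∂T₁`. -/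
def der {X : Type*} : FreeMagma X → FreeMagma X
  | .of x => .of x
  | .mul t₀ t₁ => otimes (der t₀) (der t₁)

/-- `AtomChain p a b`: `b` is obtained from `a` by at most `p` atomic
LD-expansion steps. -/
def AtomChain {X : Type*} (p : ℕ) (a b : FreeMagma X) : Prop :=
  ∃ n ≤ p, ∃ f : ℕ → FreeMagma X, f 0 = a ∧ f n = b ∧ ∀ i < n, LDAtom (f i) (f (i + 1))

/- auxiliary lemmas -/
section Aux
variable {X : Type*}

lemma otimes_mul (S t₀ t₁ : FreeMagma X) :
    otimes S (t₀ * t₁) = otimes S t₀ * otimes S t₁ := rfl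

lemma der_mul (t₀ t₁ : FreeMagma X) :
    der (t₀ * t₁) = otimes (der t₀) (der t₁) := rfl

lemma exp_otimes (S : FreeMagma X) : ∀ T, LDExp (S * T) (otimes S T)
  | .of _ => LDExp.refl _
  | .mul t₀ t₁ =>
      LDExp.trans (LDExp.ld S t₀ t₁)
        (LDExp.trans (LDExp.mul_right _ (exp_otimes S t₀))
          (LDExp.mul_left _ (exp_otimes S t₁)))

lemma exp_merge (S A : FreeMagma X) :
    ∀ B, LDExp (otimes S A * otimes S B) (otimes S (otimes A B))
  | .of _ => LDExp.refl _
  | .mul b₀ b₁ =>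
      LDExp.trans (LDExp.ld _ _ _)
        (LDExp.trans (LDExp.mul_right _ (exp_merge S A b₀))
          (LDExp.mul_left _ (exp_merge S A b₁)))

lemma exp_split (S A : FreeMagma X) :
    ∀ B, LDExp (otimes S (otimes A B)) (otimes (otimes S A) (otimes S B))
  | .of x =>
      LDExp.trans (LDExp.ld _ _ _)
        (LDExp.mul_right _ (exp_otimes (otimes S A) S))
  | .mul b₀ b₁ =>
      LDExp.trans (LDExp.mul_right _ (exp_split S A b₀))
        (LDExp.mul_left _ (exp_split S A b₁))

lemma otimes_right_mono (S : FreeMagma X) {A B : FreeMagma X} (h : LDExp A B) :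
    LDExp (otimes S A) (otimes S B) := by
  induction h with
  | ld a b c => exact LDExp.ld _ _ _
  | refl a => exact LDExp.refl _
  | trans h₁ h₂ ih₁ ih₂ => exact LDExp.trans ih₁ ih₂
  | mul_left c h ih => exact LDExp.mul_left _ ih
  | mul_right c h ih => exact LDExp.mul_right _ ih

lemma otimes_left_mono {S S' : FreeMagma X} (h : LDExp S S') :
    ∀ T, LDExp (otimes S T) (otimes S' T)
  | .of _ => LDExp.mul_right _ h
  | .mul t₀ t₁ =>
      LDExp.trans (LDExp.mul_right _ (otimes_left_mono h t₀))
        (LDExp.mul_left _ (otimes_left_mono h t₁))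

lemma exp_der : ∀ T : FreeMagma X, LDExp T (der T)
  | .of _ => LDExp.refl _
  | .mul t₀ t₁ =>
      LDExp.trans (LDExp.mul_right _ (exp_der t₀))
        (LDExp.trans (LDExp.mul_left _ (exp_der t₁))
          (exp_otimes (der t₀) (der t₁)))

lemma atom_der {T T' : FreeMagma X} (h : LDAtom T T') : LDExp T' (der T) := by
  induction h with
  | ld a b c =>
      exact LDExp.trans (LDExp.mul_right _ (exp_der (a * b)))
        (LDExp.trans (LDExp.mul_left _ (exp_der (a * c)))
          (exp_merge (der a) (der b) (der c)))
  | mul_left c h ih =>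
      exact LDExp.trans (LDExp.mul_right _ (exp_der c))
        (LDExp.trans (LDExp.mul_left _ ih) (exp_otimes _ _))
  | mul_right c h ih =>
      exact LDExp.trans (LDExp.mul_right _ ih)
        (LDExp.trans (LDExp.mul_left _ (exp_der c)) (exp_otimes _ _))

lemma der_mono {T T' : FreeMagma X} (h : LDExp T T') : LDExp (der T) (der T') := by
  induction h with
  | ld a b c => exact exp_split (der a) (der b) (der c)
  | refl a => exact LDExp.refl _
  | trans h₁ h₂ ih₁ ih₂ => exact LDExp.trans ih₁ ih₂
  | mul_left c h ih => exact otimes_right_mono _ ih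
  | mul_right c h ih => exact otimes_left_mono ih _

lemma der_iter_mono (p : ℕ) {T T' : FreeMagma X} (h : LDExp T T') :
    LDExp (der^[p] T) (der^[p] T') := by
  induction p generalizing T T' with
  | zero => exact h
  | succ p ih =>
      rw [Function.iterate_succ_apply]
      exact ih (der_mono h)

lemma exp_der_iter (p : ℕ) (T : FreeMagma X) : LDExp T (der^[p] T) := by
  induction p with
  | zero => exact LDExp.refl _
  | succ p ih =>
      rw [Function.iterate_succ_apply']
      exact LDExp.trans ih (exp_der _)

end Aux

/-- (i) `∂T` is an LD-expansion of `T` and of every atomic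
LD-expansion of `T`; (ii) `T →LD T'` implies `∂T →LD ∂T'`; (iii) for every `p`,
`∂^p T` is an LD-expansion of every term obtained from `T` by at most `p`
atomic LD-expansion steps. -/
theorem der_properties {X : Type*} :
    (∀ T : FreeMagma X, LDExp T (der T) ∧ ∀ T' : FreeMagma X, LDAtom T T' → LDExp T' (der T)) ∧
    (∀ T T' : FreeMagma X, LDExp T T' → LDExp (der T) (der T')) ∧
    (∀ (p : ℕ) (T T' : FreeMagma X), AtomChain p T T' → LDExp T' (der^[p] T)) := by

  refine ⟨fun T => ⟨exp_der T, fun T' h => atom_der h⟩,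
    fun T T' h => der_mono h, ?_⟩
  intro p
  induction p with
  | zero =>
      rintro T T' ⟨n, hn, f, h0, hn', _⟩
      interval_cases n
      rw [← h0, hn']
      exact LDExp.refl _
  | succ p ih =>
      rintro T T' ⟨n, hn, f, h0, hn', hstep⟩
      match n, hn with
      | 0, _ =>
          rw [← h0, hn'] at *
          exact exp_der_iter _ _
      | (m+1), hn =>
          have h1 : LDAtom T (f 1) := h0 ▸ hstep 0 (Nat.succ_pos m)
          have hchain : AtomChain p (f 1) T' :=
            ⟨m, Nat.lt_succ_iff.mp hn, fun i => f (i + 1), rfl, hn',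
              fun i hi => hstep (i + 1) (Nat.succ_lt_succ hi)⟩
          have h2 : LDExp T' (der^[p] (f 1)) := ih (f 1) T' hchain
          have h3 : LDExp (der^[p] (f 1)) (der^[p] (der T)) :=
            der_iter_mono p (atom_der h1)
          rw [← Function.iterate_succ_apply] at h3
          exact LDExp.trans h2 h3
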